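/- arXiv:1906.09305 — 4 statements merged into one kernel-verified Lean document; each statement's English description precedes it below -/
import Mathlib

section
/- Fix a buyer $i$ with type $t_i$, threshold $\tau_i \ge 0$, and let $C_i(t_i) = \{j : \bar v_{ij}(t_{ij}) \le \tau_i\}$ where $\bar v_{ij}(t_{ij}) = \mathbb{E}_c[(t_{ij} - \max\{\beta_{ij}(c), c_j\})^+]$. Define $\mu_i(t_i, S) = \bar v_i(t_i, C_i(t_i) \cap S)$ where $\bar v_i(t_i, P) = \mathbb{E}_c[\max_{U \subseteq P, U \in \mathcal{F}_i} \sum_{j \in U}(t_{ij} - \max\{\beta_{ij}(c), c_j\})]$ with $\mathcal{F}_i$ downward-closed. Then $\mu_i$ is $\tau_i$-Lipschitz: for all types $t, t'$ and sets $X, Y \subseteq [m]$, $|\mu_i(t, X) - \mu_i(t', Y)| \le \tau_i \cdot (|X \triangle Y| + |\{j \in X \cap Y : t_j \ne t'_j\}|)$. -/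
/-- Expected favorite-feasible-bundle surplus at item prices `pr s j`,
weights `w` over the cost randomness. -/
noncomputable def vbarP {m : ℕ} {ι : Type} [Fintype ι]
    (w : ι → ℝ) (pr : ι → Fin m → ℝ) (F : Finset (Finset (Fin m)))
    (t : Fin m → ℝ) (P : Finset (Fin m)) : ℝ :=
  ∑ s : ι, w s *
    ((F.filter (fun S => S ⊆ P)).fold max 0 (fun S => ∑ j ∈ S, (t j - pr s j)))

/-- Single-item expected surplus `v̄_{ij}(t_j) = 𝔼_c[(t_j - max(β_j(c), c_j))⁺]`. -/
noncomputable def vbarij {m : ℕ} {ι : Type} [Fintype ι]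
    (w : ι → ℝ) (β c : ι → Fin m → ℝ) (t : Fin m → ℝ) (j : Fin m) : ℝ :=
  ∑ s : ι, w s * max (t j - max (β s j) (c s j)) 0

/-- The "core" items: those with single-item surplus at most `τ`. -/
noncomputable def coreSet {m : ℕ} {ι : Type} [Fintype ι]
    (w : ι → ℝ) (β c : ι → Fin m → ℝ) (τ : ℝ) (t : Fin m → ℝ) :
    Finset (Fin m) :=
  Finset.univ.filter (fun j => vbarij w β c t j ≤ τ)

/-- `μ(t, S) = v̄(t, C(t) ∩ S)` with prices `max(β_j(c), c_j)`. -/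
noncomputable def muFn {m : ℕ} {ι : Type} [Fintype ι]
    (w : ι → ℝ) (β c : ι → Fin m → ℝ) (F : Finset (Finset (Fin m))) (τ : ℝ)
    (t : Fin m → ℝ) (S : Finset (Fin m)) : ℝ :=
  vbarP w (fun s j => max (β s j) (c s j)) F t (coreSet w β c τ t ∩ S)

lemma fold_max_nonneg {α : Type*} (s : Finset α) (f : α → ℝ) :
    0 ≤ s.fold max 0 f :=
  (Finset.le_fold_max _).mpr (Or.inl le_rfl)

lemma vbarP_mono {m : ℕ} {ι : Type} [Fintype ι]
    (w : ι → ℝ) (hw : ∀ s, 0 ≤ w s) (pr : ι → Fin m → ℝ)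
    (F : Finset (Finset (Fin m))) (t : Fin m → ℝ) {P Q : Finset (Fin m)}
    (h : P ⊆ Q) : vbarP w pr F t P ≤ vbarP w pr F t Q := by
  unfold vbarP
  refine Finset.sum_le_sum fun s _ => ?_
  refine mul_le_mul_of_nonneg_left ?_ (hw s)
  refine (Finset.fold_max_le _).mpr ⟨fold_max_nonneg _ _, fun S hS => ?_⟩
  simp only [Finset.mem_filter] at hS
  exact (Finset.le_fold_max _).mpr
    (Or.inr ⟨S, Finset.mem_filter.mpr ⟨hS.1, hS.2.trans h⟩, le_rfl⟩)

lemma vbarP_congr {m : ℕ} {ι : Type} [Fintype ι]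
    (w : ι → ℝ) (pr : ι → Fin m → ℝ)
    (F : Finset (Finset (Fin m))) {t t' : Fin m → ℝ} {P : Finset (Fin m)}
    (h : ∀ j ∈ P, t j = t' j) : vbarP w pr F t P = vbarP w pr F t' P := by
  unfold vbarP
  refine Finset.sum_congr rfl fun s _ => ?_
  congr 1
  refine Finset.fold_congr fun S hS => ?_
  simp only [Finset.mem_filter] at hS
  exact Finset.sum_congr rfl fun j hj => by rw [h j (hS.2 hj)]

lemma vbarP_insert_le {m : ℕ} {ι : Type} [Fintype ι]
    (w : ι → ℝ) (hw : ∀ s, 0 ≤ w s) (pr : ι → Fin m → ℝ)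
    (F : Finset (Finset (Fin m)))
    (hdc : ∀ S ∈ F, ∀ T ⊆ S, T ∈ F)
    (t : Fin m → ℝ) (P : Finset (Fin m)) (j : Fin m) :
    vbarP w pr F t (insert j P) ≤
      vbarP w pr F t P + ∑ s : ι, w s * max (t j - pr s j) 0 := by
  unfold vbarP
  rw [← Finset.sum_add_distrib]
  refine Finset.sum_le_sum fun s _ => ?_
  rw [← mul_add]
  refine mul_le_mul_of_nonneg_left ?_ (hw s)
  refine (Finset.fold_max_le _).mpr ⟨add_nonneg (fold_max_nonneg _ _) (le_max_right _ _),
    fun S hS => ?_⟩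
  simp only [Finset.mem_filter] at hS
  by_cases hj : j ∈ S
  · have hS' : S.erase j ∈ F := hdc S hS.1 _ (Finset.erase_subset _ _)
    have hsub : S.erase j ⊆ P := by
      intro x hx
      rw [Finset.mem_erase] at hx
      rcases Finset.mem_insert.mp (hS.2 hx.2) with h | h
      · exact absurd h hx.1
      · exact h
    have hle : ∑ k ∈ S.erase j, (t k - pr s k) ≤
        (F.filter (fun S => S ⊆ P)).fold max 0 (fun S => ∑ k ∈ S, (t k - pr s k)) :=
      (Finset.le_fold_max _).mpr
        (Or.inr ⟨S.erase j, Finset.mem_filter.mpr ⟨hS', hsub⟩, le_rfl⟩)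
    calc ∑ k ∈ S, (t k - pr s k)
        = ∑ k ∈ S.erase j, (t k - pr s k) + (t j - pr s j) :=
          (Finset.sum_erase_add S _ hj).symm
      _ ≤ _ := add_le_add hle (le_max_left _ _)
  · have hsub : S ⊆ P := fun x hx => by
      rcases Finset.mem_insert.mp (hS.2 hx) with h | h
      · exact absurd (h ▸ hx) hj
      · exact h
    refine le_add_of_le_of_nonneg ?_ (le_max_right _ _)
    exact (Finset.le_fold_max _).mpr
      (Or.inr ⟨S, Finset.mem_filter.mpr ⟨hS.1, hsub⟩, le_rfl⟩)

lemma vbarP_union_le {m : ℕ} {ι : Type} [Fintype ι]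
    (w : ι → ℝ) (hw : ∀ s, 0 ≤ w s) (β c : ι → Fin m → ℝ)
    (F : Finset (Finset (Fin m)))
    (hdc : ∀ S ∈ F, ∀ T ⊆ S, T ∈ F)
    (t : Fin m → ℝ) (G : Finset (Fin m)) (D : Finset (Fin m)) :
    vbarP w (fun s j => max (β s j) (c s j)) F t (G ∪ D) ≤
      vbarP w (fun s j => max (β s j) (c s j)) F t G + ∑ j ∈ D, vbarij w β c t j := by
  classical
  induction D using Finset.induction_on with
  | empty => simp
  | @insert a D ha ih =>
    rw [Finset.union_insert, Finset.sum_insert ha]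
    calc vbarP w (fun s j => max (β s j) (c s j)) F t (insert a (G ∪ D))
        ≤ vbarP w (fun s j => max (β s j) (c s j)) F t (G ∪ D)
            + ∑ s : ι, w s * max (t a - max (β s a) (c s a)) 0 :=
          vbarP_insert_le w hw _ F hdc t _ a
      _ ≤ (vbarP w (fun s j => max (β s j) (c s j)) F t G + ∑ j ∈ D, vbarij w β c t j)
            + vbarij w β c t a := add_le_add ih le_rfl
      _ = _ := by ring

lemma key_one_sided {m : ℕ} {ι : Type} [Fintype ι]
    (w : ι → ℝ) (hw : ∀ s, 0 ≤ w s)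
    (β c : ι → Fin m → ℝ) (F : Finset (Finset (Fin m)))
    (hdc : ∀ S ∈ F, ∀ T ⊆ S, T ∈ F)
    (τ : ℝ) (hτ : 0 ≤ τ)
    (t t' : Fin m → ℝ) (X Y : Finset (Fin m)) :
    muFn w β c F τ t X - muFn w β c F τ t' Y
      ≤ τ * ((((X \ Y) ∪ (Y \ X)).card : ℝ)
          + (((X ∩ Y).filter (fun j => t j ≠ t' j)).card : ℝ)) := by
  classical
  set A := coreSet w β c τ t ∩ X with hA
  set B := coreSet w β c τ t' ∩ Y with hB
  set G := (A ∩ B).filter (fun j => t j = t' j) with hG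
  have hGA : G ⊆ A := (Finset.filter_subset _ _).trans Finset.inter_subset_left
  have hGB : G ⊆ B := (Finset.filter_subset _ _).trans Finset.inter_subset_right
  -- step 1: μ(t,X) ≤ vbarP t G + τ * |A \ G|
  have h1 : muFn w β c F τ t X ≤
      vbarP (m := m) w (fun s j => max (β s j) (c s j)) F t G + τ * ((A \ G).card : ℝ) := by
    have hu : G ∪ (A \ G) = A := Finset.union_sdiff_of_subset hGA
    have := vbarP_union_le w hw β c F hdc t G (A \ G)
    rw [hu] at this
    refine this.trans (add_le_add le_rfl ?_)
    have hsum : ∑ j ∈ A \ G, vbarij w β c t j ≤ ∑ _j ∈ A \ G, τ := by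
      refine Finset.sum_le_sum fun j hj => ?_
      have hjA : j ∈ A := (Finset.sdiff_subset) hj
      have : j ∈ coreSet w β c τ t := Finset.inter_subset_left hjA
      simpa [coreSet] using this
    refine hsum.trans ?_
    rw [Finset.sum_const, nsmul_eq_mul, mul_comm]
  -- step 2: vbarP t G = vbarP t' G ≤ μ(t',Y)
  have h2 : vbarP (m := m) w (fun s j => max (β s j) (c s j)) F t G ≤
      muFn w β c F τ t' Y := by
    have heq : vbarP (m := m) w (fun s j => max (β s j) (c s j)) F t G =
        vbarP (m := m) w (fun s j => max (β s j) (c s j)) F t' G := by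
      refine vbarP_congr w _ F fun j hj => ?_
      exact (Finset.mem_filter.mp hj).2
    rw [heq]
    exact vbarP_mono w hw _ F t' hGB
  -- step 3: |A \ G| ≤ |X Δ Y| + |filter|
  have h3 : ((A \ G).card : ℝ) ≤ (((X \ Y) ∪ (Y \ X)).card : ℝ)
      + (((X ∩ Y).filter (fun j => t j ≠ t' j)).card : ℝ) := by
    have hsub : A \ G ⊆ ((X \ Y) ∪ (Y \ X)) ∪ (X ∩ Y).filter (fun j => t j ≠ t' j) := by
      intro j hj
      rw [Finset.mem_sdiff] at hj
      obtain ⟨hjA, hjG⟩ := hj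
      have hjX : j ∈ X := Finset.inter_subset_right hjA
      have hjcore : vbarij w β c t j ≤ τ := by
        have : j ∈ coreSet w β c τ t := Finset.inter_subset_left hjA
        simpa [coreSet] using this
      by_cases hjY : j ∈ Y
      · by_cases htt : t j = t' j
        · exfalso
          apply hjG
          rw [hG, Finset.mem_filter]
          refine ⟨Finset.mem_inter.mpr ⟨hjA, ?_⟩, htt⟩
          rw [hB, Finset.mem_inter]
          refine ⟨?_, hjY⟩
          have : vbarij w β c t' j = vbarij w β c t j := by
            unfold vbarij; rw [htt]
          simp only [coreSet, Finset.mem_filter, Finset.mem_univ, true_and]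
          rw [this]; exact hjcore
        · exact Finset.mem_union_right _
            (Finset.mem_filter.mpr ⟨Finset.mem_inter.mpr ⟨hjX, hjY⟩, htt⟩)
      · exact Finset.mem_union_left _
          (Finset.mem_union_left _ (Finset.mem_sdiff.mpr ⟨hjX, hjY⟩))
    have := (Finset.card_le_card hsub).trans (Finset.card_union_le _ _)
    exact_mod_cast this
  have := sub_le_iff_le_add.mpr ((h1.trans (add_le_add h2 le_rfl)).trans_eq (add_comm _ _))
  calc muFn w β c F τ t X - muFn w β c F τ t' Y ≤ τ * ((A \ G).card : ℝ) := by linarith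
    _ ≤ _ := mul_le_mul_of_nonneg_left h3 hτ

/-- the truncated valuation `μ` is `τ`-Lipschitz. -/
theorem stmt_10 {m : ℕ} {ι : Type} [Fintype ι]
    (w : ι → ℝ) (hw : ∀ s, 0 ≤ w s)
    (β c : ι → Fin m → ℝ) (F : Finset (Finset (Fin m)))
    (hdc : ∀ S ∈ F, ∀ T ⊆ S, T ∈ F) (hne : ∅ ∈ F)
    (τ : ℝ) (hτ : 0 ≤ τ) :
    ∀ (t t' : Fin m → ℝ) (X Y : Finset (Fin m)),
      |muFn w β c F τ t X - muFn w β c F τ t' Y|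
        ≤ τ * ((((X \ Y) ∪ (Y \ X)).card : ℝ)
            + (((X ∩ Y).filter (fun j => t j ≠ t' j)).card : ℝ)) := by
  intro t t' X Y
  rw [abs_sub_le_iff]
  constructor
  · exact key_one_sided w hw β c F hdc τ hτ t t' X Y
  · have h := key_one_sided w hw β c F hdc τ hτ t' t Y X
    have e1 : (Y \ X) ∪ (X \ Y) = (X \ Y) ∪ (Y \ X) := Finset.union_comm _ _
    have e2 : (Y ∩ X).filter (fun j => t' j ≠ t j)
        = (X ∩ Y).filter (fun j => t j ≠ t' j) := by
      rw [Finset.inter_comm]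
      exact Finset.filter_congr fun j _ => by simp [ne_comm]
    rw [e1, e2] at h
    exact h
end

section
/- Let nonnegative reals $(r_{ij})_{i \in [n], j \in [m]}$, thresholds $\tau_i \ge 0$, and random variables $t_{ij}$ with functions $\bar v_{ij}$ be such that $r_{ij} \ge a \cdot \Pr[\bar v_{ij}(t_{ij}) \ge a]$ for all $a \ge \tau_i$, and $\sum_j \Pr[\bar v_{ij}(t_{ij}) > \tau_i] \le 1/2$ for each $i$. Then $\sum_i \sum_j \mathbb{E}\big[\mathbf{1}[\bar v_{ij}(t_{ij}) > \tau_i] \cdot \bar v_{ij}(t_{ij}) \cdot \sum_{k \ne j} \Pr[\bar v_{ik}(t_{ik}) \ge \bar v_{ij}(t_{ij})]\big] \le \tfrac{1}{2} \sum_i \sum_j r_{ij}$, where $t_{i1}, \ldots, t_{im}$ are independent for each $i$. -/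
/-- Probability (w.r.t. weights `w`) that the random value `v` is at least `a`. -/
noncomputable def prGE {Ω : Type} [Fintype Ω] (w v : Ω → ℝ) (a : ℝ) : ℝ :=
  ∑ ω : Ω, if a ≤ v ω then w ω else 0

/-- Probability (w.r.t. weights `w`) that the random value `v` is strictly above `a`. -/
noncomputable def prGT {Ω : Type} [Fintype Ω] (w v : Ω → ℝ) (a : ℝ) : ℝ :=
  ∑ ω : Ω, if a < v ω then w ω else 0

/-- Tail ≤ r/2: with independent coordinates `t_{ij}` (modelled
by independent finite probability spaces `Ω i j`), if
`r_{ij} ≥ a · Pr[v̄_{ij} ≥ a]` for all `a ≥ τ_i` and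
`∑_j Pr[v̄_{ij} > τ_i] ≤ 1/2` for each `i`, then the tail term is at most
`(1/2) ∑_{i,j} r_{ij}`. -/
theorem stmt_12 (n m : ℕ) (Ω : Fin n → Fin m → Type)
    [∀ i j, Fintype (Ω i j)]
    (w v : ∀ i j, Ω i j → ℝ)
    (r : Fin n → Fin m → ℝ) (τ : Fin n → ℝ)
    (hw0 : ∀ i j ω, 0 ≤ w i j ω) (hw1 : ∀ i j, ∑ ω : Ω i j, w i j ω = 1)
    (hr0 : ∀ i j, 0 ≤ r i j) (hτ : ∀ i, 0 ≤ τ i)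
    (hr : ∀ i j a, τ i ≤ a → a * prGE (w i j) (v i j) a ≤ r i j)
    (hhalf : ∀ i, ∑ j, prGT (w i j) (v i j) (τ i) ≤ 1 / 2) :
    ∑ i, ∑ j, ∑ ω : Ω i j, w i j ω *
        (if τ i < v i j ω then
          v i j ω * ∑ k ∈ Finset.univ.erase j, prGE (w i k) (v i k) (v i j ω)
        else 0)
      ≤ (1 / 2 : ℝ) * ∑ i, ∑ j, r i j := by
  rw [Finset.mul_sum]
  apply Finset.sum_le_sum
  intro i _
  set S := ∑ j, r i j with hS
  have hS0 : 0 ≤ S := Finset.sum_nonneg fun j _ => hr0 i j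
  have key : ∀ j : Fin m, ∑ ω : Ω i j, w i j ω *
      (if τ i < v i j ω then
        v i j ω * ∑ k ∈ Finset.univ.erase j, prGE (w i k) (v i k) (v i j ω)
      else 0) ≤ prGT (w i j) (v i j) (τ i) * S := by
    intro j
    rw [prGT, Finset.sum_mul]
    apply Finset.sum_le_sum
    intro ω _
    by_cases h : τ i < v i j ω
    · simp only [if_pos h]
      have hv : ∀ k ∈ Finset.univ.erase j,
          v i j ω * prGE (w i k) (v i k) (v i j ω) ≤ r i k := by
        intro k _
        exact hr i k _ (le_of_lt h)
      calc w i j ω * (v i j ω * ∑ k ∈ Finset.univ.erase j, prGE (w i k) (v i k) (v i j ω))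
          = w i j ω * ∑ k ∈ Finset.univ.erase j, v i j ω * prGE (w i k) (v i k) (v i j ω) := by
            rw [Finset.mul_sum]
        _ ≤ w i j ω * ∑ k ∈ Finset.univ.erase j, r i k :=
            mul_le_mul_of_nonneg_left (Finset.sum_le_sum hv) (hw0 i j ω)
        _ ≤ w i j ω * S := by
            refine mul_le_mul_of_nonneg_left ?_ (hw0 i j ω)
            exact Finset.sum_le_sum_of_subset_of_nonneg (Finset.erase_subset _ _)
              (fun k _ _ => hr0 i k)
    · simp [h]
  calc ∑ j, ∑ ω : Ω i j, w i j ω *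
        (if τ i < v i j ω then
          v i j ω * ∑ k ∈ Finset.univ.erase j, prGE (w i k) (v i k) (v i j ω)
        else 0)
      ≤ ∑ j, prGT (w i j) (v i j) (τ i) * S := Finset.sum_le_sum fun j _ => key j
    _ = (∑ j, prGT (w i j) (v i j) (τ i)) * S := (Finset.sum_mul _ _ _).symm
    _ ≤ (1 / 2) * S := mul_le_mul_of_nonneg_right (hhalf i) hS0
end

section
/- Core-tail decomposition: Let $\bar v_i(t_i, \cdot)$ be monotone, subadditive, nonnegative set functions with no externalities, and $\bar v_{ij}(t_{ij}) = \bar v_i(t_i, \{j\})$. Let $\tau_i \ge 0$ and $C_i(t_i) = \{j : \bar v_{ij}(t_{ij}) \le \tau_i\}$. For each $i$ and $t_i$, let $j(t_i)$ be the index of the region containing $t_i$ (each $t_i$ assigned to exactly one $j$, where $t_i \in R_{ij}$ implies $\bar v_{ij}(t_{ij}) \ge \bar v_{ik}(t_{ik})$ for all $k$). Then $\sum_i \mathbb{E}_{t_i}[\bar v_i(t_i, [m] \setminus \{j(t_i)\})] \le \sum_i \mathbb{E}_{t_i}[\bar v_i(t_i, C_i(t_i))] + \sum_i \sum_k \mathbb{E}_{t_{ik}}\big[\mathbf{1}[\bar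 v_{ik}(t_{ik}) > \tau_i] \cdot \bar v_{ik}(t_{ik}) \cdot \Pr_{t_{i,-k}}[\exists\, k' \ne k:\ \bar v_{ik'}(t_{ik'}) \ge \bar v_{ik}(t_{ik})]\big]$. -/
/-! Subadditivity bounds the value of all items but the favourite `j` by the value of the core
plus the singleton values of the other items; each of these lies above `τ` and is weakly beaten
by `j`. As `v t {k}` depends only on `t k` and the competing values only on the other coordinates,
independence lets the event "some other item beats `k`" be evaluated on a fresh sample `t'`. That
resampling identity holds because swapping the `k`-th coordinates of two independent samples
preserves the product weight. -/

open Finset Function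

section ProductWeights

variable {ι : Type*} [DecidableEq ι] {T : ι → Type*}

def swapCoord (k : ι) (p : (∀ j, T j) × (∀ j, T j)) : (∀ j, T j) × (∀ j, T j) :=
  (update p.1 k (p.2 k), update p.2 k (p.1 k))

theorem swapCoord_involutive (k : ι) : Involutive (swapCoord (T := T) k) := by
  rintro ⟨t, t'⟩
  simp [swapCoord]

variable [Fintype ι] (w : ∀ j, T j → ℝ)

theorem prod_weights_update (t : ∀ j, T j) (k : ι) (x : T k) :
    ∏ j, w j (update t k x j) = w k x * ∏ j ∈ {k}ᶜ, w j (t j) := by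
  rw [Fintype.prod_eq_mul_prod_compl k, update_self]
  congr 1
  exact prod_congr rfl fun j hj => by rw [update_of_ne (by simpa using hj)]

theorem prod_weights_mul_swapCoord (k : ι) (p : (∀ j, T j) × (∀ j, T j)) :
    (∏ j, w j ((swapCoord k p).1 j)) * ∏ j, w j ((swapCoord k p).2 j)
      = (∏ j, w j (p.1 j)) * ∏ j, w j (p.2 j) := by
  simp only [swapCoord, prod_weights_update]
  rw [Fintype.prod_eq_mul_prod_compl k (fun j => w j (p.1 j)),
    Fintype.prod_eq_mul_prod_compl k (fun j => w j (p.2 j))]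
  ring

variable [∀ j, Fintype (T j)]

theorem sum_prod_weights_eq_one (hw1 : ∀ j, ∑ x, w j x = 1) :
    ∑ t : ∀ j, T j, ∏ j, w j (t j) = 1 := by
  rw [← Fintype.prod_sum]
  simp [hw1]

/-- Under a product distribution, resampling every coordinate except the `k`-th one does not
change an expectation. -/
theorem sum_prod_weights_mul_resample (hw1 : ∀ j, ∑ x, w j x = 1) (G : (∀ j, T j) → ℝ)
    (k : ι) :
    ∑ t : ∀ j, T j, (∏ j, w j (t j)) *
        ∑ t' : ∀ j, T j, (∏ j, w j (t' j)) * G (update t' k (t k))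
      = ∑ t : ∀ j, T j, (∏ j, w j (t j)) * G t := by
  calc _ = ∑ p : (∀ j, T j) × (∀ j, T j),
        (∏ j, w j (p.1 j)) * (∏ j, w j (p.2 j)) * G (swapCoord k p).2 := by
        rw [Fintype.sum_prod_type' fun (t t' : ∀ j, T j) =>
          (∏ j, w j (t j)) * (∏ j, w j (t' j)) * G (swapCoord k (t, t')).2]
        simp only [mul_sum, mul_assoc, swapCoord]
    _ = ∑ p : (∀ j, T j) × (∀ j, T j), (∏ j, w j (p.1 j)) * (∏ j, w j (p.2 j)) * G p.2 :=
        Fintype.sum_equiv (swapCoord_involutive k).toPerm _ _ fun p => by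
          simp [prod_weights_mul_swapCoord]
    _ = _ := by
        rw [Fintype.sum_prod_type' fun (t t' : ∀ j, T j) =>
          (∏ j, w j (t j)) * (∏ j, w j (t' j)) * G t']
        simp only [mul_assoc, ← sum_mul_sum, sum_prod_weights_eq_one w hw1, one_mul]

end ProductWeights

section CoreTail

variable {ι : Type*} [DecidableEq ι]

theorem le_add_sum_singleton {f : Finset ι → ℝ} (hsub : ∀ U V, f (U ∪ V) ≤ f U + f V)
    (A S : Finset ι) : f (A ∪ S) ≤ f A + ∑ k ∈ S, f {k} := by
  induction S using Finset.induction_on with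
  | empty => simp
  | insert k S hk ih =>
    calc f (A ∪ insert k S) = f ((A ∪ S) ∪ {k}) := by
          rw [union_assoc, union_singleton]
      _ ≤ f (A ∪ S) + f {k} := hsub _ _
      _ ≤ f A + ∑ k ∈ insert k S, f {k} := by
          rw [sum_insert hk]
          linarith

variable [Fintype ι]

theorem le_core_add_tail {f : Finset ι → ℝ} (τ : ℝ) (j : ι)
    (hmono : ∀ U V, U ⊆ V → f U ≤ f V) (hsub : ∀ U V, f (U ∪ V) ≤ f U + f V)
    (hnonneg : ∀ S, 0 ≤ f S) (hfav : ∀ k, f {k} ≤ f {j}) :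
    f (univ \ {j}) ≤ f (univ.filter fun k => f {k} ≤ τ) +
      ∑ k, if τ < f {k} then
        f {k} * (if ∃ k' ∈ univ.erase k, f {k} ≤ f {k'} then 1 else 0) else 0 := by
  set C := univ.filter fun k => f {k} ≤ τ
  set S := univ.filter fun k => τ < f {k} ∧ k ≠ j
  have hcover : univ \ {j} ⊆ C ∪ S := by
    intro k
    simp only [C, S, mem_sdiff, mem_union, mem_filter, mem_univ, mem_singleton, true_and]
    intro hk
    exact (le_or_gt (f {k}) τ).imp id (⟨·, hk⟩)
  calc f (univ \ {j}) ≤ f (C ∪ S) := hmono _ _ hcover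
    _ ≤ f C + ∑ k ∈ S, f {k} := le_add_sum_singleton hsub C S
    _ ≤ _ := by
      gcongr
      refine (sum_congr rfl fun k hk => ?_).trans_le
        (sum_le_sum_of_subset_of_nonneg (subset_univ S) fun k _ _ => ?_)
      · obtain ⟨hτk, hkj⟩ := (mem_filter.1 hk).2
        rw [if_pos hτk, if_pos ⟨j, mem_erase.2 ⟨hkj.symm, mem_univ j⟩, hfav k⟩, mul_one]
      · split_ifs <;> simp [hnonneg]

variable {T : ι → Type*} [∀ j, Fintype (T j)] (w : ∀ j, T j → ℝ)

theorem sum_tail_eq_sum_tail_resampled (hw1 : ∀ j, ∑ x, w j x = 1)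
    (v : (∀ j, T j) → Finset ι → ℝ) (hv : ∀ t t' j, t j = t' j → v t {j} = v t' {j})
    (τ : ℝ) (k : ι) :
    ∑ t : ∀ j, T j, (∏ j, w j (t j)) * (if τ < v t {k} then
        v t {k} * (if ∃ k' ∈ univ.erase k, v t {k} ≤ v t {k'} then 1 else 0) else 0)
      = ∑ t : ∀ j, T j, (∏ j, w j (t j)) * (if τ < v t {k} then
        v t {k} * ∑ t' : ∀ j, T j, (∏ j, w j (t' j)) *
          (if ∃ k' ∈ univ.erase k, v t {k} ≤ v t' {k'} then 1 else 0) else 0) := by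
  rw [← sum_prod_weights_mul_resample w hw1 _ k]
  refine sum_congr rfl fun t _ => ?_
  have hk : ∀ t', v (update t' k (t k)) {k} = v t {k} := fun t' => hv _ _ _ (update_self ..)
  have hex : ∀ t', (∃ k' ∈ univ.erase k, v t {k} ≤ v (update t' k (t k)) {k'}) ↔
      ∃ k' ∈ univ.erase k, v t {k} ≤ v t' {k'} := fun t' =>
    exists_congr fun k' => and_congr_right fun hk' => by
      rw [hv _ t' _ (update_of_ne (ne_of_mem_erase hk') ..)]
  simp only [hk, hex]
  split_ifs
  · simp only [mul_sum]
    refine sum_congr rfl fun _ _ => ?_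
    rw [mul_left_comm (v t {k})]
    -- `simp` has rewritten the `Decidable` instance of the `∃` together with its condition
    congr!
  · simp

theorem expected_value_compl_le (hw0 : ∀ j x, 0 ≤ w j x) (hw1 : ∀ j, ∑ x, w j x = 1)
    (v : (∀ j, T j) → Finset ι → ℝ) (τ : ℝ) (jmap : (∀ j, T j) → ι)
    (hmono : ∀ t U V, U ⊆ V → v t U ≤ v t V) (hsub : ∀ t U V, v t (U ∪ V) ≤ v t U + v t V)
    (hnonneg : ∀ t S, 0 ≤ v t S) (hv : ∀ t t' j, t j = t' j → v t {j} = v t' {j})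
    (hfav : ∀ t k, v t {k} ≤ v t {jmap t}) :
    ∑ t : ∀ j, T j, (∏ j, w j (t j)) * v t (univ \ {jmap t})
      ≤ ∑ t : ∀ j, T j, (∏ j, w j (t j)) * v t (univ.filter fun j => v t {j} ≤ τ)
        + ∑ k, ∑ t : ∀ j, T j, (∏ j, w j (t j)) * (if τ < v t {k} then
          v t {k} * ∑ t' : ∀ j, T j, (∏ j, w j (t' j)) *
            (if ∃ k' ∈ univ.erase k, v t {k} ≤ v t' {k'} then 1 else 0) else 0) := by
  simp only [← sum_tail_eq_sum_tail_resampled w hw1 v hv τ]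
  rw [sum_comm (s := univ), ← sum_add_distrib]
  gcongr with t
  rw [← mul_sum, ← mul_add]
  exact mul_le_mul_of_nonneg_left
    (le_core_add_tail τ (jmap t) (hmono t) (hsub t) (hnonneg t) (hfav t))
    (prod_nonneg fun j _ => hw0 j _)

end CoreTail

theorem stmt_15_general (n m : ℕ) (T : Fin n → Fin m → Type)
    [∀ i j, Fintype (T i j)]
    (w : ∀ i j, T i j → ℝ)
    (v : ∀ i, (∀ j, T i j) → Finset (Fin m) → ℝ)
    (τ : Fin n → ℝ) (jmap : ∀ i, (∀ j, T i j) → Fin m)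
    (hw0 : ∀ i j x, 0 ≤ w i j x) (hw1 : ∀ i j, ∑ x : T i j, w i j x = 1)
    (hmono : ∀ i t U V, U ⊆ V → v i t U ≤ v i t V)
    (hsub : ∀ i t U V, v i t (U ∪ V) ≤ v i t U + v i t V)
    (hnonneg : ∀ i t S, 0 ≤ v i t S)
    (hnoext : ∀ i (t t' : ∀ j, T i j) (S : Finset (Fin m)),
      (∀ j ∈ S, t j = t' j) → v i t S = v i t' S)
    (hfav : ∀ i t k, v i t {k} ≤ v i t {jmap i t}) :
    ∑ i, ∑ t : ∀ j, T i j, (∏ j, w i j (t j)) *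
        v i t (Finset.univ \ {jmap i t})
      ≤ (∑ i, ∑ t : ∀ j, T i j, (∏ j, w i j (t j)) *
            v i t (Finset.univ.filter (fun j => v i t {j} ≤ τ i)))
        + ∑ i, ∑ k, ∑ t : ∀ j, T i j, (∏ j, w i j (t j)) *
            (if τ i < v i t {k} then
              v i t {k} *
                (∑ t' : ∀ j, T i j, (∏ j, w i j (t' j)) *
                  (if ∃ k' ∈ Finset.univ.erase k, v i t {k} ≤ v i t' {k'}
                    then 1 else 0))
            else 0) := by
  rw [← sum_add_distrib]
  gcongr with i
  refine (expected_value_compl_le (w i) (hw0 i) (hw1 i) (v i) (τ i) (jmap i) (hmono i) (hsub i)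
    (hnonneg i) (fun t t' j h => hnoext i t t' {j} fun j' hj' => by rwa [mem_singleton.1 hj'])
    (hfav i)).trans_eq ?_
  -- on `Fin m` the `∃` is decided by `Nat.decidableExistsFin`, not the generic `Fintype` instance
  congr!

/-- core-tail decomposition: for each buyer `i`, the type has
independent coordinates (modelled by a product of finite probability spaces);
`v i t ·` is monotone, subadditive, nonnegative and has no externalities;
`jmap i t` is the region (favorite coordinate) of `t`, so that
`v i t {k} ≤ v i t {jmap i t}` for all `k`.  Then the expected non-favorite
value is at most the core term plus the tail term. -/
theorem stmt_15 (n m : ℕ) (T : Fin n → Fin m → Type)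
    [∀ i j, Fintype (T i j)]
    (w : ∀ i j, T i j → ℝ)
    (v : ∀ i, (∀ j, T i j) → Finset (Fin m) → ℝ)
    (τ : Fin n → ℝ) (jmap : ∀ i, (∀ j, T i j) → Fin m)
    (hw0 : ∀ i j x, 0 ≤ w i j x) (hw1 : ∀ i j, ∑ x : T i j, w i j x = 1)
    (hτ : ∀ i, 0 ≤ τ i)
    (hmono : ∀ i t U V, U ⊆ V → v i t U ≤ v i t V)
    (hsub : ∀ i t U V, v i t (U ∪ V) ≤ v i t U + v i t V)
    (hnonneg : ∀ i t S, 0 ≤ v i t S)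
    (hnoext : ∀ i (t t' : ∀ j, T i j) (S : Finset (Fin m)),
      (∀ j ∈ S, t j = t' j) → v i t S = v i t' S)
    (hfav : ∀ i t k, v i t {k} ≤ v i t {jmap i t}) :
    ∑ i, ∑ t : ∀ j, T i j, (∏ j, w i j (t j)) *
        v i t (Finset.univ \ {jmap i t})
      ≤ (∑ i, ∑ t : ∀ j, T i j, (∏ j, w i j (t j)) *
            v i t (Finset.univ.filter (fun j => v i t {j} ≤ τ i)))
        + ∑ i, ∑ k, ∑ t : ∀ j, T i j, (∏ j, w i j (t j)) *
            (if τ i < v i t {k} then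
              v i t {k} *
                (∑ t' : ∀ j, T i j, (∏ j, w i j (t' j)) *
                  (if ∃ k' ∈ Finset.univ.erase k, v i t {k} ≤ v i t' {k'}
                    then 1 else 0))
            else 0) :=
  stmt_15_general n m T w v τ jmap hw0 hw1 hmono hsub hnonneg hnoext hfav
end

section
/- Talagrand-type concentration corollary: Let $g(t, \cdot)$ be a random monotone subadditive set function over independent items on ground set $[m]$ that is $c$-Lipschitz, and let $\delta$ be half the median of $g(t, [m])$, i.e., $\Pr_t[g(t,[m]) \le 2\delta] \ge 1/2$. Then $\mathbb{E}_t[g(t, [m])] \le 4\delta + \tfrac{5}{2} c$. -/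
open scoped Classical
open Finset Function
set_option linter.unusedSectionVars false
set_option maxHeartbeats 1000000

namespace Stmt16Aux
variable {m : ℕ} {T : Fin m → Type} [∀ j, Fintype (T j)]

noncomputable def mu (w : ∀ j, T j → ℝ) (t : ∀ j, T j) : ℝ := ∏ j, w j (t j)

lemma mu_update {w : ∀ j, T j → ℝ} (t : ∀ j, T j) (i : Fin m) (x : T i) :
    mu w (Function.update t i x) * w i (t i) = w i x * mu w t := by
  have h1 : mu w (Function.update t i x)
      = w i x * ∏ j ∈ univ \ {i}, w j (t j) := by
    rw [mu, Finset.prod_eq_mul_prod_sdiff_singleton_of_mem (mem_univ i)]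
    simp only [update_self]
    congr 1
    refine Finset.prod_congr rfl fun j hj => ?_
    rw [update_of_ne (by simpa using (Finset.mem_sdiff.1 hj).2)]
  have h2 : mu w t = w i (t i) * ∏ j ∈ univ \ {i}, w j (t j) := by
    rw [mu, Finset.prod_eq_mul_prod_sdiff_singleton_of_mem (mem_univ i)]
  rw [h1, h2]; ring

lemma split {w : ∀ j, T j → ℝ} (hw1 : ∀ j, ∑ x : T j, w j x = 1)
    (i : Fin m) (F : (∀ j, T j) → ℝ) :
    ∑ t : ∀ j, T j, mu w t * F t
      = ∑ ω : T i, w i ω * ∑ t : ∀ j, T j, mu w t * F (Function.update t i ω) := by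
  have key : ∀ ω : T i, ∑ t : ∀ j, T j, w i (t i) * (mu w (Function.update t i ω)
      * F (Function.update t i ω))
      = ∑ u ∈ univ.filter (fun u : ∀ j, T j => u i = ω), mu w u * F u := by
    intro ω
    rw [← Finset.sum_fiberwise univ (fun t : ∀ j, T j => t i)
      (fun t => w i (t i) * (mu w (Function.update t i ω) * F (Function.update t i ω)))]
    have inner : ∀ x : T i,
        ∑ t ∈ univ.filter (fun t : ∀ j, T j => t i = x),
          w i (t i) * (mu w (Function.update t i ω) * F (Function.update t i ω))
        = w i x * ∑ u ∈ univ.filter (fun u : ∀ j, T j => u i = ω), mu w u * F u := by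
      intro x
      rw [Finset.mul_sum]
      refine Finset.sum_nbij' (fun t => Function.update t i ω)
        (fun u => Function.update u i x) ?_ ?_ ?_ ?_ ?_
      · intro a ha; simp [update_self]
      · intro a ha; simp [update_self]
      · intro a ha
        simp only [mem_filter, mem_univ, true_and] at ha
        show Function.update (Function.update a i ω) i x = a
        rw [update_idem, ← ha, update_eq_self]
      · intro a ha
        simp only [mem_filter, mem_univ, true_and] at ha
        show Function.update (Function.update a i x) i ω = a
        rw [update_idem, ← ha, update_eq_self]
      · intro a ha
        simp only [mem_filter, mem_univ, true_and] at ha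
        rw [ha]
    rw [Finset.sum_congr rfl fun x _ => inner x, ← Finset.sum_mul, hw1 i, one_mul]
  calc ∑ t : ∀ j, T j, mu w t * F t
      = ∑ ω : T i, ∑ u ∈ univ.filter (fun u : ∀ j, T j => u i = ω), mu w u * F u := by
        rw [Finset.sum_fiberwise univ (fun t : ∀ j, T j => t i) (fun t => mu w t * F t)]
    _ = ∑ ω : T i, ∑ t : ∀ j, T j, w i (t i) * (mu w (Function.update t i ω)
          * F (Function.update t i ω)) := by
        refine Finset.sum_congr rfl fun ω _ => (key ω).symm
    _ = ∑ ω : T i, w i ω * ∑ t : ∀ j, T j, mu w t * F (Function.update t i ω) := by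
        refine Finset.sum_congr rfl fun ω _ => ?_
        rw [Finset.mul_sum]
        refine Finset.sum_congr rfl fun t _ => ?_
        have := mu_update (w := w) t i ω
        linear_combination F (Function.update t i ω) * this


noncomputable def cnt (s : Finset (Fin m)) (t y z : ∀ j, T j) : ℕ :=
  (s.filter fun j => t j ≠ y j ∧ t j ≠ z j).card

noncomputable def fA (s : Finset (Fin m)) (A B : Finset (∀ j, T j)) (t : ∀ j, T j) : ℕ :=
  sInf {n | ∃ y ∈ A, ∃ z ∈ B, n = cnt s t y z}

lemma fA_le {s : Finset (Fin m)} {A B : Finset (∀ j, T j)} {t y z : ∀ j, T j}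
    (hy : y ∈ A) (hz : z ∈ B) : fA s A B t ≤ cnt s t y z :=
  Nat.sInf_le ⟨y, hy, z, hz, rfl⟩

lemma fA_spec {s : Finset (Fin m)} {A B : Finset (∀ j, T j)} (t : ∀ j, T j)
    (hA : A.Nonempty) (hB : B.Nonempty) :
    ∃ y ∈ A, ∃ z ∈ B, fA s A B t = cnt s t y z := by
  obtain ⟨y, hy⟩ := hA; obtain ⟨z, hz⟩ := hB
  exact Nat.sInf_mem (⟨cnt s t y z, y, hy, z, hz, rfl⟩ :
    Set.Nonempty {n | ∃ y ∈ A, ∃ z ∈ B, n = cnt s t y z})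

noncomputable def sec (i : Fin m) (x : T i) (A : Finset (∀ j, T j)) : Finset (∀ j, T j) :=
  univ.filter (fun u => Function.update u i x ∈ A)

noncomputable def proj (i : Fin m) (A : Finset (∀ j, T j)) : Finset (∀ j, T j) :=
  univ.filter (fun u => ∃ x, Function.update u i x ∈ A)

lemma mem_sec {i : Fin m} {x : T i} {A : Finset (∀ j, T j)} {u : ∀ j, T j} :
    u ∈ sec i x A ↔ Function.update u i x ∈ A := by simp [sec]

lemma mem_proj {i : Fin m} {A : Finset (∀ j, T j)} {u : ∀ j, T j} :
    u ∈ proj i A ↔ ∃ x, Function.update u i x ∈ A := by simp [proj]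

lemma subset_proj (i : Fin m) (A : Finset (∀ j, T j)) : A ⊆ proj i A := by
  intro t ht
  exact mem_proj.2 ⟨t i, by rwa [update_eq_self]⟩

lemma proj_nonempty {i : Fin m} {A : Finset (∀ j, T j)} (hA : A.Nonempty) :
    (proj i A).Nonempty := hA.mono (subset_proj i A)

lemma sec_subset_proj (i : Fin m) (x : T i) (A : Finset (∀ j, T j)) :
    sec i x A ⊆ proj i A := by
  intro u hu
  exact mem_proj.2 ⟨x, mem_sec.1 hu⟩

lemma fA_update {s : Finset (Fin m)} {A B : Finset (∀ j, T j)} {t : ∀ j, T j}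
    {i : Fin m} (hi : i ∉ s) (ω : T i) :
    fA s A B (Function.update t i ω) = fA s A B t := by
  have hcnt : ∀ y z : ∀ j, T j, cnt s (Function.update t i ω) y z = cnt s t y z := by
    intro y z
    unfold cnt
    congr 1
    apply Finset.filter_congr
    intro j hj
    have hne : j ≠ i := fun h => hi (h ▸ hj)
    rw [update_of_ne hne]
  simp only [fA, hcnt]

lemma key_one {i : Fin m} {s' : Finset (Fin m)} (hi : i ∉ s')
    {A B : Finset (∀ j, T j)} (hB : B.Nonempty) (t : ∀ j, T j)
    (hsec : (sec i (t i) A).Nonempty) :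
    fA (insert i s') A B t ≤ fA s' (sec i (t i) A) (proj i B) t := by
  obtain ⟨y, hy, z, hz, hf⟩ := fA_spec (s := s') t hsec (proj_nonempty hB)
  rw [hf]
  have hy' : Function.update y i (t i) ∈ A := mem_sec.1 hy
  obtain ⟨x₂, hz'⟩ := mem_proj.1 hz
  refine le_trans (fA_le hy' hz') ?_
  unfold cnt
  apply card_le_card
  intro j hj
  simp only [mem_filter, mem_insert] at hj ⊢
  obtain ⟨hj1, hj2, hj3⟩ := hj
  rcases hj1 with rfl | hj1
  · rw [update_self] at hj2
    exact absurd rfl hj2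
  · have hne : j ≠ i := fun h => hi (h ▸ hj1)
    rw [update_of_ne hne] at hj2
    rw [update_of_ne hne] at hj3
    exact ⟨hj1, hj2, hj3⟩

lemma key_two {i : Fin m} {s' : Finset (Fin m)} (hi : i ∉ s')
    {A B : Finset (∀ j, T j)} (hA : A.Nonempty) (t : ∀ j, T j)
    (hsec : (sec i (t i) B).Nonempty) :
    fA (insert i s') A B t ≤ fA s' (proj i A) (sec i (t i) B) t := by
  obtain ⟨y, hy, z, hz, hf⟩ := fA_spec (s := s') t (proj_nonempty hA) hsec
  rw [hf]
  obtain ⟨x₁, hy'⟩ := mem_proj.1 hy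
  have hz' : Function.update z i (t i) ∈ B := mem_sec.1 hz
  refine le_trans (fA_le hy' hz') ?_
  unfold cnt
  apply card_le_card
  intro j hj
  simp only [mem_filter, mem_insert] at hj ⊢
  obtain ⟨hj1, hj2, hj3⟩ := hj
  rcases hj1 with rfl | hj1
  · rw [update_self] at hj3
    exact absurd rfl hj3
  · have hne : j ≠ i := fun h => hi (h ▸ hj1)
    rw [update_of_ne hne] at hj2
    rw [update_of_ne hne] at hj3
    exact ⟨hj1, hj2, hj3⟩

lemma key_three {i : Fin m} {s' : Finset (Fin m)} (hi : i ∉ s')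
    {A B : Finset (∀ j, T j)} (hA : A.Nonempty) (hB : B.Nonempty) (t : ∀ j, T j) :
    fA (insert i s') A B t ≤ 1 + fA s' (proj i A) (proj i B) t := by
  obtain ⟨y, hy, z, hz, hf⟩ := fA_spec (s := s') t (proj_nonempty hA) (proj_nonempty hB)
  rw [hf]
  obtain ⟨x₁, hy'⟩ := mem_proj.1 hy
  obtain ⟨x₂, hz'⟩ := mem_proj.1 hz
  refine le_trans (fA_le hy' hz') ?_
  unfold cnt
  have hsub : (insert i s').filter
        (fun j => t j ≠ Function.update y i x₁ j ∧ t j ≠ Function.update z i x₂ j)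
      ⊆ insert i (s'.filter (fun j => t j ≠ y j ∧ t j ≠ z j)) := by
    intro j hj
    simp only [mem_filter, mem_insert] at hj ⊢
    obtain ⟨hj1, hj2, hj3⟩ := hj
    rcases hj1 with rfl | hj1
    · exact Or.inl rfl
    · have hne : j ≠ i := fun h => hi (h ▸ hj1)
      rw [update_of_ne hne] at hj2
      rw [update_of_ne hne] at hj3
      exact Or.inr ⟨hj1, hj2, hj3⟩
  refine le_trans (card_le_card hsub) ?_
  refine le_trans (card_insert_le _ _) ?_
  omega

lemma Lscalar {a b al be : ℝ} (ha : 0 < a) (hb : 0 < b) (hal : 0 < al) (hha : al ≤ a)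
    (hbe : 0 < be) (hhb : be ≤ b) :
    al * be * (b * min (2*a) (3*a - 2*al) + a * min (2*b) (3*b - 2*be))
      ≤ 2 * (a^2 * b^2) := by
  rcases le_total (2*a) (3*a - 2*al) with h1 | h1 <;>
    rcases le_total (2*b) (3*b - 2*be) with h2 | h2
  · rw [min_eq_left h1, min_eq_left h2]
    have h3 : 0 ≤ (a - 2*al) * be := mul_nonneg (by linarith) hbe.le
    have h4 : 0 ≤ a * (b - be) := mul_nonneg ha.le (by linarith)
    nlinarith [mul_nonneg (mul_nonneg ha.le hb.le) h3,
      mul_nonneg (mul_nonneg ha.le hb.le) h4]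
  · rw [min_eq_left h1, min_eq_right h2]
    have h3 : 0 ≤ (a - 2*al) * (be * (5*b - 2*be)) :=
      mul_nonneg (by linarith) (mul_nonneg hbe.le (by linarith))
    nlinarith [mul_nonneg (mul_nonneg ha.le ha.le) (sq_nonneg (4*be - 5*b)),
      mul_nonneg ha.le h3, sq_nonneg (a*be - a*b), mul_pos ha hb]
  · rw [min_eq_right h1, min_eq_left h2]
    have h3 : 0 ≤ (b - 2*be) * (al * (5*a - 2*al)) :=
      mul_nonneg (by linarith) (mul_nonneg hal.le (by linarith))
    nlinarith [mul_nonneg (mul_nonneg hb.le hb.le) (sq_nonneg (4*al - 5*a)),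
      mul_nonneg hb.le h3, sq_nonneg (b*al - b*a), mul_pos ha hb]
  · rw [min_eq_right h1, min_eq_right h2]
    have e1 : 0 ≤ (2*al - a) * b := mul_nonneg (by linarith) hb.le
    have e2 : 0 ≤ (2*be - b) * a := mul_nonneg (by linarith) ha.le
    have e3 : 0 ≤ al*b + a*be - a*b := by nlinarith
    have p0 : 0 ≤ a - al := by linarith
    have q0 : 0 ≤ b - be := by linarith
    nlinarith [sq_nonneg (b*(a-al)), sq_nonneg (a*(b-be)),
      mul_nonneg (mul_nonneg p0 q0) e3]



lemma mu_nonneg {w : ∀ j, T j → ℝ} (hw0 : ∀ j x, 0 ≤ w j x) (t : ∀ j, T j) :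
    0 ≤ mu w t := Finset.prod_nonneg fun j _ => hw0 j _

lemma sum_mu {w : ∀ j, T j → ℝ} (hw1 : ∀ j, ∑ x : T j, w j x = 1) :
    ∑ t : ∀ j, T j, mu w t = 1 := by
  have := (Fintype.prod_sum (fun j (x : T j) => w j x)).symm
  simp only [mu]
  rw [this]
  simp [hw1]

lemma talagrand {w : ∀ j, T j → ℝ} (hw0 : ∀ j x, 0 ≤ w j x)
    (hw1 : ∀ j, ∑ x : T j, w j x = 1)
    (s : Finset (Fin m)) (A B : Finset (∀ j, T j)) (hA : A.Nonempty) (hB : B.Nonempty) :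
    (∑ t ∈ A, mu w t) * (∑ t ∈ B, mu w t)
      * ∑ t : ∀ j, T j, mu w t * 2 ^ (fA s A B t) ≤ 1 := by
  induction s using Finset.induction generalizing A B with
  | empty =>
    have hf : ∀ t : ∀ j, T j, fA (∅ : Finset (Fin m)) A B t = 0 := by
      intro t
      obtain ⟨y, hy⟩ := hA; obtain ⟨z, hz⟩ := hB
      have := fA_le (s := (∅ : Finset (Fin m))) (t := t) hy hz
      simpa [cnt] using this
    simp only [hf, pow_zero, mul_one]
    rw [sum_mu hw1, mul_one]
    have hα0 : 0 ≤ ∑ t ∈ A, mu w t := Finset.sum_nonneg fun t _ => mu_nonneg hw0 t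
    have hβ0 : 0 ≤ ∑ t ∈ B, mu w t := Finset.sum_nonneg fun t _ => mu_nonneg hw0 t
    have hα1 : ∑ t ∈ A, mu w t ≤ 1 := by
      rw [← sum_mu (w := w) hw1]
      exact Finset.sum_le_sum_of_subset_of_nonneg (subset_univ A)
        (fun t _ _ => mu_nonneg hw0 t)
    have hβ1 : ∑ t ∈ B, mu w t ≤ 1 := by
      rw [← sum_mu (w := w) hw1]
      exact Finset.sum_le_sum_of_subset_of_nonneg (subset_univ B)
        (fun t _ _ => mu_nonneg hw0 t)
    nlinarith
  | @insert i s' hi IH =>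
    have hPA := proj_nonempty (i := i) hA
    have hPB := proj_nonempty (i := i) hB
    have hα0 : 0 ≤ ∑ t ∈ A, mu w t := Finset.sum_nonneg fun t _ => mu_nonneg hw0 t
    have hβ0 : 0 ≤ ∑ t ∈ B, mu w t := Finset.sum_nonneg fun t _ => mu_nonneg hw0 t
    have hH0 : 0 ≤ ∑ t : ∀ j, T j, mu w t * 2 ^ fA (insert i s') A B t :=
      Finset.sum_nonneg fun t _ => mul_nonneg (mu_nonneg hw0 t) (by positivity)
    rcases eq_or_lt_of_le hα0 with h | hαpos
    · rw [← h, zero_mul, zero_mul]; exact zero_le_one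
    rcases eq_or_lt_of_le hβ0 with h | hβpos
    · rw [← h, mul_zero, zero_mul]; exact zero_le_one
    set α := ∑ t ∈ A, mu w t with hαdef
    set β := ∑ t ∈ B, mu w t with hβdef
    set a := ∑ t ∈ proj i A, mu w t with hadef
    set b := ∑ t ∈ proj i B, mu w t with hbdef
    have hαa : α ≤ a := Finset.sum_le_sum_of_subset_of_nonneg (subset_proj i A)
      (fun t _ _ => mu_nonneg hw0 t)
    have hβb : β ≤ b := Finset.sum_le_sum_of_subset_of_nonneg (subset_proj i B)
      (fun t _ _ => mu_nonneg hw0 t)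
    have hapos : 0 < a := lt_of_lt_of_le hαpos hαa
    have hbpos : 0 < b := lt_of_lt_of_le hβpos hβb
    set cA : T i → ℝ := fun ω => ∑ t ∈ sec i ω A, mu w t with hcAdef
    set cB : T i → ℝ := fun ω => ∑ t ∈ sec i ω B, mu w t with hcBdef
    have hcA0 : ∀ ω, 0 ≤ cA ω := fun ω => Finset.sum_nonneg fun t _ => mu_nonneg hw0 t
    have hcB0 : ∀ ω, 0 ≤ cB ω := fun ω => Finset.sum_nonneg fun t _ => mu_nonneg hw0 t
    have hcAa : ∀ ω, cA ω ≤ a := fun ω =>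
      Finset.sum_le_sum_of_subset_of_nonneg (sec_subset_proj i ω A)
        (fun t _ _ => mu_nonneg hw0 t)
    have hcBb : ∀ ω, cB ω ≤ b := fun ω =>
      Finset.sum_le_sum_of_subset_of_nonneg (sec_subset_proj i ω B)
        (fun t _ _ => mu_nonneg hw0 t)
    -- total mass of sections
    have hsum_cA : ∑ ω : T i, w i ω * cA ω = α := by
      have hs := split (w := w) hw1 i (fun t => if t ∈ A then (1:ℝ) else 0)
      have l1 : ∑ t : ∀ j, T j, mu w t * (if t ∈ A then (1:ℝ) else 0) = α := by
        rw [hαdef]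
        simp [mul_ite, Finset.sum_ite_mem]
      have l2 : ∀ ω : T i, ∑ t : ∀ j, T j,
          mu w t * (if Function.update t i ω ∈ A then (1:ℝ) else 0) = cA ω := by
        intro ω
        rw [hcAdef]
        simp only [sec, Finset.sum_filter, mul_ite, mul_one, mul_zero]
      rw [l1] at hs
      rw [hs]
      exact Finset.sum_congr rfl fun ω _ => by rw [l2 ω]
    have hsum_cB : ∑ ω : T i, w i ω * cB ω = β := by
      have hs := split (w := w) hw1 i (fun t => if t ∈ B then (1:ℝ) else 0)
      have l1 : ∑ t : ∀ j, T j, mu w t * (if t ∈ B then (1:ℝ) else 0) = β := by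
        rw [hβdef]
        simp [mul_ite, Finset.sum_ite_mem]
      have l2 : ∀ ω : T i, ∑ t : ∀ j, T j,
          mu w t * (if Function.update t i ω ∈ B then (1:ℝ) else 0) = cB ω := by
        intro ω
        rw [hcBdef]
        simp only [sec, Finset.sum_filter, mul_ite, mul_one, mul_zero]
      rw [l1] at hs
      rw [hs]
      exact Finset.sum_congr rfl fun ω _ => by rw [l2 ω]
    -- conditional expectations
    set I : T i → ℝ := fun ω => ∑ t : ∀ j, T j,
        mu w t * 2 ^ fA (insert i s') A B (Function.update t i ω) with hIdef
    have hI0 : ∀ ω, 0 ≤ I ω := fun ω =>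
      Finset.sum_nonneg fun t _ => mul_nonneg (mu_nonneg hw0 t) (by positivity)
    have hsplitH : (∑ t : ∀ j, T j, mu w t * 2 ^ fA (insert i s') A B t)
        = ∑ ω : T i, w i ω * I ω :=
      split hw1 i (fun t => (2:ℝ) ^ fA (insert i s') A B t)
    -- bound (c)
    have hbound2 : ∀ ω : T i, a * b * I ω ≤ 2 := by
      intro ω
      have hmono : I ω ≤ 2 * ∑ t : ∀ j, T j,
          mu w t * 2 ^ fA s' (proj i A) (proj i B) t := by
        rw [hIdef, Finset.mul_sum]
        refine Finset.sum_le_sum fun t _ => ?_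
        have hkey : fA (insert i s') A B (Function.update t i ω)
            ≤ 1 + fA s' (proj i A) (proj i B) t := by
          refine le_trans (key_three hi hA hB (Function.update t i ω)) ?_
          rw [fA_update hi]
        have hp : (2:ℝ) ^ fA (insert i s') A B (Function.update t i ω)
            ≤ 2 ^ (1 + fA s' (proj i A) (proj i B) t) :=
          pow_le_pow_right₀ one_le_two hkey
        calc mu w t * 2 ^ fA (insert i s') A B (Function.update t i ω)
            ≤ mu w t * 2 ^ (1 + fA s' (proj i A) (proj i B) t) :=
              mul_le_mul_of_nonneg_left hp (mu_nonneg hw0 t)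
          _ = 2 * (mu w t * 2 ^ fA s' (proj i A) (proj i B) t) := by
              rw [pow_add, pow_one]; ring
      have hIH := IH (proj i A) (proj i B) hPA hPB
      have h2 := mul_le_mul_of_nonneg_left hmono (mul_nonneg hapos.le hbpos.le)
      nlinarith [h2, hIH]
    -- bound (a)
    have hbonda : ∀ ω : T i, (sec i ω A).Nonempty → cA ω * b * I ω ≤ 1 := by
      intro ω hsec
      have hmono : I ω ≤ ∑ t : ∀ j, T j,
          mu w t * 2 ^ fA s' (sec i ω A) (proj i B) t := by
        rw [hIdef]
        refine Finset.sum_le_sum fun t _ => ?_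
        have hkey : fA (insert i s') A B (Function.update t i ω)
            ≤ fA s' (sec i ω A) (proj i B) t := by
          have h1 := key_one hi hB (Function.update t i ω)
            (by rwa [update_self])
          rw [update_self] at h1
          exact le_trans h1 (le_of_eq (fA_update hi ω))
        exact mul_le_mul_of_nonneg_left (pow_le_pow_right₀ one_le_two hkey)
          (mu_nonneg hw0 t)
      have hIH := IH (sec i ω A) (proj i B) hsec hPB
      have h2 := mul_le_mul_of_nonneg_left hmono (mul_nonneg (hcA0 ω) hbpos.le)
      linarith
    -- bound (b)
    have hbondb : ∀ ω : T i, (sec i ω B).Nonempty → a * cB ω * I ω ≤ 1 := by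
      intro ω hsec
      have hmono : I ω ≤ ∑ t : ∀ j, T j,
          mu w t * 2 ^ fA s' (proj i A) (sec i ω B) t := by
        rw [hIdef]
        refine Finset.sum_le_sum fun t _ => ?_
        have hkey : fA (insert i s') A B (Function.update t i ω)
            ≤ fA s' (proj i A) (sec i ω B) t := by
          have h1 := key_two hi hA (Function.update t i ω)
            (by rwa [update_self])
          rw [update_self] at h1
          exact le_trans h1 (le_of_eq (fA_update hi ω))
        exact mul_le_mul_of_nonneg_left (pow_le_pow_right₀ one_le_two hkey)
          (mu_nonneg hw0 t)
      have hIH := IH (proj i A) (sec i ω B) hPA hsec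
      have h2 := mul_le_mul_of_nonneg_left hmono (mul_nonneg hapos.le (hcB0 ω))
      linarith
    -- min bounds
    set QA : T i → ℝ := fun ω => min (2*a) (3*a - 2*cA ω) with hQAdef
    set QB : T i → ℝ := fun ω => min (2*b) (3*b - 2*cB ω) with hQBdef
    have hQAb : ∀ ω, a * (a * b * I ω) ≤ QA ω := by
      intro ω
      refine le_min ?_ ?_
      · have := mul_le_mul_of_nonneg_left (hbound2 ω) hapos.le
        linarith
      · rcases le_or_gt (2 * cA ω) a with h | h
        · have := mul_le_mul_of_nonneg_left (hbound2 ω) hapos.le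
          linarith
        · have hsec : (sec i ω A).Nonempty := by
            rw [Finset.nonempty_iff_ne_empty]
            intro he
            have hz : cA ω = 0 := by
              simp only [hcAdef]
              rw [he, Finset.sum_empty]
            rw [hz] at h
            linarith
          have h1 := hbonda ω hsec
          have hcApos : 0 < cA ω := by linarith
          have e1 : 0 ≤ (a - cA ω) * (2*cA ω - a) :=
            mul_nonneg (by linarith [hcAa ω]) (by linarith)
          have e2 := mul_le_mul_of_nonneg_left h1 (mul_nonneg hapos.le hapos.le)
          nlinarith [e1, e2, hcApos, hI0 ω, mul_nonneg hbpos.le (hI0 ω)]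
    have hQBb : ∀ ω, b * (a * b * I ω) ≤ QB ω := by
      intro ω
      refine le_min ?_ ?_
      · have := mul_le_mul_of_nonneg_left (hbound2 ω) hbpos.le
        linarith
      · rcases le_or_gt (2 * cB ω) b with h | h
        · have := mul_le_mul_of_nonneg_left (hbound2 ω) hbpos.le
          linarith
        · have hsec : (sec i ω B).Nonempty := by
            rw [Finset.nonempty_iff_ne_empty]
            intro he
            have hz : cB ω = 0 := by
              simp only [hcBdef]
              rw [he, Finset.sum_empty]
            rw [hz] at h
            linarith
          have h1 := hbondb ω hsec
          have hcBpos : 0 < cB ω := by linarith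
          have e1 : 0 ≤ (b - cB ω) * (2*cB ω - b) :=
            mul_nonneg (by linarith [hcBb ω]) (by linarith)
          have e2 := mul_le_mul_of_nonneg_left h1 (mul_nonneg hbpos.le hbpos.le)
          nlinarith [e1, e2, hcBpos, hI0 ω, mul_nonneg hapos.le (hI0 ω)]
    -- sum the min bounds
    have hsumQA : ∑ ω : T i, w i ω * QA ω ≤ min (2*a) (3*a - 2*α) := by
      refine le_min ?_ ?_
      · calc ∑ ω : T i, w i ω * QA ω ≤ ∑ ω : T i, w i ω * (2*a) :=
            Finset.sum_le_sum fun ω _ =>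
              mul_le_mul_of_nonneg_left (min_le_left _ _) (hw0 i ω)
          _ = 2*a := by rw [← Finset.sum_mul, hw1 i, one_mul]
      · calc ∑ ω : T i, w i ω * QA ω ≤ ∑ ω : T i, w i ω * (3*a - 2*cA ω) :=
            Finset.sum_le_sum fun ω _ =>
              mul_le_mul_of_nonneg_left (min_le_right _ _) (hw0 i ω)
          _ = 3*a - 2*α := by
            rw [Finset.sum_congr rfl (fun ω _ => (by ring :
              w i ω * (3*a - 2*cA ω) = 3*a*(w i ω) - 2*(w i ω * cA ω))),
              Finset.sum_sub_distrib, ← Finset.mul_sum, hw1 i, ← Finset.mul_sum, hsum_cA]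
            ring
    have hsumQB : ∑ ω : T i, w i ω * QB ω ≤ min (2*b) (3*b - 2*β) := by
      refine le_min ?_ ?_
      · calc ∑ ω : T i, w i ω * QB ω ≤ ∑ ω : T i, w i ω * (2*b) :=
            Finset.sum_le_sum fun ω _ =>
              mul_le_mul_of_nonneg_left (min_le_left _ _) (hw0 i ω)
          _ = 2*b := by rw [← Finset.sum_mul, hw1 i, one_mul]
      · calc ∑ ω : T i, w i ω * QB ω ≤ ∑ ω : T i, w i ω * (3*b - 2*cB ω) :=
            Finset.sum_le_sum fun ω _ =>
              mul_le_mul_of_nonneg_left (min_le_right _ _) (hw0 i ω)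
          _ = 3*b - 2*β := by
            rw [Finset.sum_congr rfl (fun ω _ => (by ring :
              w i ω * (3*b - 2*cB ω) = 3*b*(w i ω) - 2*(w i ω * cB ω))),
              Finset.sum_sub_distrib, ← Finset.mul_sum, hw1 i, ← Finset.mul_sum, hsum_cB]
            ring
    -- combine
    have hchain : 2*(a^2*b^2)*(∑ ω : T i, w i ω * I ω)
        ≤ b * min (2*a) (3*a-2*α) + a * min (2*b) (3*b-2*β) := by
      calc 2*(a^2*b^2)*(∑ ω : T i, w i ω * I ω)
          = ∑ ω : T i, w i ω * (2*(a^2*b^2) * I ω) := by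
            rw [Finset.mul_sum]
            exact Finset.sum_congr rfl fun ω _ => by ring
        _ ≤ ∑ ω : T i, w i ω * (b * QA ω + a * QB ω) := by
            refine Finset.sum_le_sum fun ω _ => ?_
            refine mul_le_mul_of_nonneg_left ?_ (hw0 i ω)
            have u1 := mul_le_mul_of_nonneg_left (hQAb ω) hbpos.le
            have u2 := mul_le_mul_of_nonneg_left (hQBb ω) hapos.le
            nlinarith [u1, u2]
        _ = b * (∑ ω : T i, w i ω * QA ω) + a * (∑ ω : T i, w i ω * QB ω) := by
            rw [Finset.mul_sum, Finset.mul_sum, ← Finset.sum_add_distrib]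
            exact Finset.sum_congr rfl fun ω _ => by ring
        _ ≤ b * min (2*a) (3*a-2*α) + a * min (2*b) (3*b-2*β) := by
            have h1' := mul_le_mul_of_nonneg_left hsumQA hbpos.le
            have h2' := mul_le_mul_of_nonneg_left hsumQB hapos.le
            linarith
    have hL := Lscalar hapos hbpos hαpos hαa hβpos hβb
    rw [hsplitH]
    have hS0 : 0 ≤ ∑ ω : T i, w i ω * I ω :=
      Finset.sum_nonneg fun ω _ => mul_nonneg (hw0 i ω) (hI0 ω)
    have h2 := mul_le_mul_of_nonneg_left hchain (mul_nonneg hα0 hβ0)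
    have hP : (0:ℝ) < 2*(a^2*b^2) := by positivity
    have h3 : 2*(a^2*b^2) * (α*β*(∑ ω : T i, w i ω * I ω)) ≤ 2*(a^2*b^2) * 1 := by
      nlinarith [h2, hL]
    exact le_of_mul_le_mul_left h3 hP

lemma two_mul_le_pow (n : ℕ) : 2*n ≤ 2^n + 1 := by
  induction n with
  | zero => simp
  | succ k ih =>
    rcases Nat.eq_zero_or_pos k with h|h
    · subst h; norm_num
    · have h2 : 2^(k+1) = 2*2^k := by ring
      have h3 : 2 ≤ 2^k := by
        calc 2 = 2^1 := by norm_num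
        _ ≤ 2^k := Nat.pow_le_pow_right (by norm_num) h
      omega

lemma nat_le_half_pow (n : ℕ) : (n:ℝ) ≤ 2^n/2 + 1/2 := by
  have hc := two_mul_le_pow n
  have h : (2*n : ℝ) ≤ 2^n + 1 := by exact_mod_cast hc
  linarith

end Stmt16Aux

open Stmt16Aux in
/-- Talagrand-type concentration corollary: let `g(t, ·)` be a
random monotone subadditive nonnegative set function over independent items
(product of finite probability spaces) that is `c`-Lipschitz, and let `δ` be
half the median of `g(t, [m])`, i.e. `Pr[g(t,[m]) ≤ 2δ] ≥ 1/2`.  Then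
`𝔼[g(t, [m])] ≤ 4δ + (5/2)c`. -/
theorem stmt_16 (m : ℕ) (T : Fin m → Type) [∀ j, Fintype (T j)]
    (w : ∀ j, T j → ℝ) (g : (∀ j, T j) → Finset (Fin m) → ℝ) (c δ : ℝ)
    (hw0 : ∀ j x, 0 ≤ w j x) (hw1 : ∀ j, ∑ x : T j, w j x = 1)
    (hmono : ∀ t U V, U ⊆ V → g t U ≤ g t V)
    (hsub : ∀ t U V, g t (U ∪ V) ≤ g t U + g t V)
    (hnonneg : ∀ t S, 0 ≤ g t S)
    (hnoext : ∀ (t t' : ∀ j, T j) (S : Finset (Fin m)),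
      (∀ j ∈ S, t j = t' j) → g t S = g t' S)
    (hlip : ∀ (t t' : ∀ j, T j) (X Y : Finset (Fin m)),
      |g t X - g t' Y| ≤ c * ((((X \ Y) ∪ (Y \ X)).card : ℝ)
        + (((X ∩ Y).filter (fun j => t j ≠ t' j)).card : ℝ)))
    (hc : 0 ≤ c) (hδ : 0 ≤ δ)
    (hmed : (1 / 2 : ℝ) ≤ ∑ t : ∀ j, T j, (∏ j, w j (t j)) *
      (if g t Finset.univ ≤ 2 * δ then 1 else 0)) :
    ∑ t : ∀ j, T j, (∏ j, w j (t j)) * g t Finset.univ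
      ≤ 4 * δ + 5 / 2 * c := by
  set A : Finset (∀ j, T j) :=
    Finset.univ.filter (fun t => g t Finset.univ ≤ 2 * δ) with hAdef
  have hmedA : (1/2 : ℝ) ≤ ∑ t ∈ A, mu w t := by
    refine le_trans hmed (le_of_eq ?_)
    rw [hAdef, Finset.sum_filter]
    exact Finset.sum_congr rfl fun t _ => by
      by_cases h : g t Finset.univ ≤ 2 * δ <;> simp [h, mu]
  have hAne : A.Nonempty := by
    rw [Finset.nonempty_iff_ne_empty]
    intro he
    rw [he, Finset.sum_empty] at hmedA
    linarith
  -- expectation of 2^f is at most 4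
  have hE0 : 0 ≤ ∑ t : ∀ j, T j, mu w t * 2 ^ (fA Finset.univ A A t) :=
    Finset.sum_nonneg fun t _ => mul_nonneg (mu_nonneg hw0 t) (by positivity)
  have hE2f : ∑ t : ∀ j, T j, mu w t * 2 ^ (fA Finset.univ A A t) ≤ 4 := by
    have htal := talagrand hw0 hw1 Finset.univ A A hAne hAne
    set M := ∑ t ∈ A, mu w t with hM
    set E := ∑ t : ∀ j, T j, mu w t * 2 ^ (fA Finset.univ A A t) with hEdef
    have h := mul_nonneg (mul_nonneg hE0 (by linarith : (0:ℝ) ≤ M - 1/2))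
      (by linarith : (0:ℝ) ≤ M + 1/2)
    nlinarith [htal, h]
  -- pointwise bound on g
  have hg : ∀ t : ∀ j, T j,
      g t Finset.univ ≤ 4*δ + c * ((fA Finset.univ A A t : ℕ) : ℝ) := by
    intro t
    obtain ⟨y, hy, z, hz, hf⟩ := fA_spec (s := (Finset.univ : Finset (Fin m))) t hAne hAne
    set K : Finset (Fin m) :=
      Finset.univ.filter (fun j => t j ≠ y j ∧ t j ≠ z j) with hKdef
    set J1 : Finset (Fin m) := Finset.univ.filter (fun j => t j = y j) with hJ1def
    set J2 : Finset (Fin m) :=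
      Finset.univ.filter (fun j => t j ≠ y j ∧ t j = z j) with hJ2def
    have hcover : (Finset.univ : Finset (Fin m)) ⊆ (J1 ∪ K) ∪ J2 := by
      intro j _
      by_cases h1 : t j = y j
      · refine Finset.mem_union_left _ (Finset.mem_union_left _ ?_)
        simp only [hJ1def, Finset.mem_filter, Finset.mem_univ, true_and]
        exact h1
      by_cases h2 : t j = z j
      · refine Finset.mem_union_right _ ?_
        simp only [hJ2def, Finset.mem_filter, Finset.mem_univ, true_and]
        exact ⟨h1, h2⟩
      · refine Finset.mem_union_left _ (Finset.mem_union_right _ ?_)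
        simp only [hKdef, Finset.mem_filter, Finset.mem_univ, true_and]
        exact ⟨h1, h2⟩
    have h1 : g t Finset.univ ≤ g t ((J1 ∪ K) ∪ J2) := hmono t _ _ hcover
    have h2 : g t ((J1 ∪ K) ∪ J2) ≤ g t (J1 ∪ K) + g t J2 := hsub t _ _
    have h3 : g t (J1 ∪ K) ≤ g t J1 + c * (K.card : ℝ) := by
      have hl := hlip t t (J1 ∪ K) J1
      have hd1 : (J1 ∪ K) \ J1 ∪ J1 \ (J1 ∪ K) = K \ J1 := by
        rw [Finset.union_sdiff_left, Finset.sdiff_eq_empty_iff_subset.2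
          Finset.subset_union_left, Finset.union_empty]
      have hd2 : ((J1 ∪ K) ∩ J1).filter (fun j => t j ≠ t j) = ∅ := by
        apply Finset.filter_false_of_mem
        intro j _
        simp
      rw [hd1, hd2] at hl
      simp only [Finset.card_empty, Nat.cast_zero, add_zero] at hl
      have hcard : ((K \ J1).card : ℝ) ≤ (K.card : ℝ) := by
        exact_mod_cast Finset.card_le_card (Finset.sdiff_subset)
      have habs : g t (J1 ∪ K) - g t J1 ≤ c * ((K \ J1).card : ℝ) :=
        le_trans (le_abs_self _) hl
      have := mul_le_mul_of_nonneg_left hcard hc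
      linarith
    have h4 : g t J1 ≤ 2*δ := by
      have heq := hnoext t y J1 (fun j hj => by
        have := Finset.mem_filter.1 hj
        exact this.2)
      rw [heq]
      have hy2 : g y Finset.univ ≤ 2*δ := (Finset.mem_filter.1 hy).2
      exact le_trans (hmono y J1 Finset.univ (Finset.subset_univ _)) hy2
    have h5 : g t J2 ≤ 2*δ := by
      have heq := hnoext t z J2 (fun j hj => by
        have := Finset.mem_filter.1 hj
        exact this.2.2)
      rw [heq]
      have hz2 : g z Finset.univ ≤ 2*δ := (Finset.mem_filter.1 hz).2
      exact le_trans (hmono z J2 Finset.univ (Finset.subset_univ _)) hz2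
    have hfK : ((fA Finset.univ A A t : ℕ) : ℝ) = (K.card : ℝ) := by
      rw [hf]; rfl
    rw [hfK]
    linarith
  -- assemble
  have hEf : ∑ t : ∀ j, T j, mu w t * ((fA Finset.univ A A t : ℕ) : ℝ) ≤ 5/2 := by
    have step1 : ∑ t : ∀ j, T j, mu w t * ((fA Finset.univ A A t : ℕ) : ℝ)
        ≤ ∑ t : ∀ j, T j, mu w t * ((2:ℝ)^(fA Finset.univ A A t)/2 + 1/2) :=
      Finset.sum_le_sum fun t _ =>
        mul_le_mul_of_nonneg_left (nat_le_half_pow _) (mu_nonneg hw0 t)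
    have step2 : ∑ t : ∀ j, T j, mu w t * ((2:ℝ)^(fA Finset.univ A A t)/2 + 1/2)
        = (∑ t : ∀ j, T j, mu w t * 2^(fA Finset.univ A A t))/2
          + (∑ t : ∀ j, T j, mu w t)/2 := by
      rw [Finset.sum_div, Finset.sum_div, ← Finset.sum_add_distrib]
      exact Finset.sum_congr rfl fun t _ => by ring
    rw [step2, sum_mu hw1] at step1
    linarith
  calc ∑ t : ∀ j, T j, (∏ j, w j (t j)) * g t Finset.univ
      = ∑ t : ∀ j, T j, mu w t * g t Finset.univ := rfl
    _ ≤ ∑ t : ∀ j, T j, mu w t * (4*δ + c * ((fA Finset.univ A A t : ℕ) : ℝ)) :=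
        Finset.sum_le_sum fun t _ =>
          mul_le_mul_of_nonneg_left (hg t) (mu_nonneg hw0 t)
    _ = 4*δ*(∑ t : ∀ j, T j, mu w t)
        + c * ∑ t : ∀ j, T j, mu w t * ((fA Finset.univ A A t : ℕ) : ℝ) := by
        rw [Finset.mul_sum, Finset.mul_sum, ← Finset.sum_add_distrib]
        exact Finset.sum_congr rfl fun t _ => by ring
    _ ≤ 4 * δ + 5 / 2 * c := by
        rw [sum_mu hw1]
        have := mul_le_mul_of_nonneg_left hEf hc
        linarith
end
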